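/- arXiv:1911.08314 — 3 statements merged into one kernel-verified Lean document; each statement's English description precedes it below -/
import Mathlib

section
/- In the Weyl algebra of four oscillators, the Casimir operator C^{(1234)} = (J_0^{(1234)})² − J_+^{(1234)} J_-^{(1234)} − J_0^{(1234)} of the sum of four metaplectic representations of su(1,1) equals −(1/4)Σ_{1≤μ<ν≤4} L_{μν}² minus a constant; in particular C^{(1234)} = −2K_1 where K_1 = (1/8)Σ_{1≤μ<ν≤4} L_{μν}² (the normalization of K_1 being adjusted by the appropriate additive scalar if necessary). -/
/-!
Write `N = ∑ a†_μ a_μ`, `P = ∑ (a†_μ)²`, `Q = ∑ a_μ²` for `n` oscillators. Then `J₀ = N/2 + n/4` and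
`J₊J₋ = PQ/4`, while normal ordering with the canonical commutation relations gives
`∑_{μ<ν} L_{μν}² = PQ - N² - (n-2)N`. Hence `C = -(1/4) ∑_{μ<ν} L_{μν}² + n(n-4)/16`, and the
additive constant vanishes exactly for `n = 4`.
-/

open Finset

theorem sum_sum_ite_lt_add_sum_diag {ι M : Type*} [Fintype ι] [LinearOrder ι] [AddCommMonoid M]
    (g : ι → ι → M) :
    ∑ i, ∑ j, (if i < j then g i j + g j i else 0) + ∑ i, g i i = ∑ i, ∑ j, g i j := by
  have hsplit : ∀ i j, g i j =
      (if i < j then g i j else 0) + (if j < i then g i j else 0) + (if i = j then g i j else 0) := by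
    intro i j
    rcases lt_trichotomy i j with h | rfl | h
    · simp [h, h.ne, h.not_gt]
    · simp
    · simp [h, h.ne', h.not_gt]
  have hswap : ∑ i, ∑ j, (if j < i then g i j else 0) = ∑ i, ∑ j, (if i < j then g j i else 0) :=
    sum_comm
  rw [sum_congr rfl fun i _ => sum_congr rfl fun j _ => hsplit i j]
  simp only [ite_add_zero, sum_add_distrib, hswap, sum_ite_eq, mem_univ, if_true]

section CanonicalCommutation

variable {R ι : Type*} [Ring R] {a ad : ι → R}

def numberOp [Fintype ι] (a ad : ι → R) : R := ∑ μ, ad μ * a μ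

theorem mul_eq_mul_add_ite [DecidableEq ι]
    (hcomm : ∀ μ ν, a μ * ad ν - ad ν * a μ = if μ = ν then 1 else 0) (μ ν : ι) :
    a μ * ad ν = ad ν * a μ + if μ = ν then 1 else 0 := by
  rw [← hcomm, add_sub_cancel]

theorem numberOp_mul_self [Fintype ι] [DecidableEq ι]
    (hcomm : ∀ μ ν, a μ * ad ν - ad ν * a μ = if μ = ν then 1 else 0) :
    numberOp a ad * numberOp a ad = ∑ μ, ∑ ν, ad μ * ad ν * (a μ * a ν) + numberOp a ad := by
  have h : ∀ μ ν, ad μ * a μ * (ad ν * a ν) =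
      ad μ * ad ν * (a μ * a ν) + if μ = ν then ad μ * a ν else 0 := by
    intro μ ν
    calc ad μ * a μ * (ad ν * a ν) = ad μ * (a μ * ad ν) * a ν := by noncomm_ring
      _ = _ := by rw [mul_eq_mul_add_ite hcomm]; split_ifs <;> noncomm_ring
  simp only [numberOp, sum_mul_sum, h, sum_add_distrib, sum_ite_eq, mem_univ, if_true]

theorem angularMomentum_sq_of_ne [DecidableEq ι]
    (hcomm : ∀ μ ν, a μ * ad ν - ad ν * a μ = if μ = ν then 1 else 0)
    {μ ν : ι} (h : μ ≠ ν) :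
    (ad μ * a ν - a μ * ad ν) ^ 2 =
      (ad μ * ad μ * (a ν * a ν) - ad μ * ad ν * (a ν * a μ) - ad μ * a μ) +
      (ad ν * ad ν * (a μ * a μ) - ad ν * ad μ * (a μ * a ν) - ad ν * a ν) := by
  have hμν := mul_eq_mul_add_ite hcomm μ ν
  have hνμ := mul_eq_mul_add_ite hcomm ν μ
  have hμμ := mul_eq_mul_add_ite hcomm μ μ
  have hνν := mul_eq_mul_add_ite hcomm ν ν
  simp only [h, h.symm, if_true, if_false, add_zero] at hμν hνμ hμμ hνν
  calc (ad μ * a ν - a μ * ad ν) ^ 2 = (ad μ * a ν - ad ν * a μ) ^ 2 := by rw [hμν]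
    _ = ad μ * (a ν * ad μ) * a ν - ad μ * (a ν * ad ν) * a μ
        - ad ν * (a μ * ad μ) * a ν + ad ν * (a μ * ad ν) * a μ := by noncomm_ring
    _ = _ := by rw [hμν, hνμ, hμμ, hνν]; noncomm_ring

theorem sum_lt_angularMomentum_sq [Fintype ι] [LinearOrder ι]
    (hcomm : ∀ μ ν, a μ * ad ν - ad ν * a μ = if μ = ν then 1 else 0)
    (haa : ∀ μ ν, a μ * a ν = a ν * a μ) :
    ∑ μ, ∑ ν, (if μ < ν then (ad μ * a ν - a μ * ad ν) ^ 2 else 0) =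
      (∑ μ, ad μ * ad μ) * (∑ ν, a ν * a ν) - numberOp a ad * numberOp a ad
        - ((Fintype.card ι : R) - 2) * numberOp a ad := by
  set g : ι → ι → R :=
    fun μ ν => ad μ * ad μ * (a ν * a ν) - ad μ * ad ν * (a ν * a μ) - ad μ * a μ with hg
  have hlt : ∑ μ, ∑ ν, (if μ < ν then (ad μ * a ν - a μ * ad ν) ^ 2 else 0) =
      ∑ μ, ∑ ν, (if μ < ν then g μ ν + g ν μ else 0) := by
    refine sum_congr rfl fun μ _ => sum_congr rfl fun ν _ => ?_
    split_ifs with h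
    exacts [angularMomentum_sq_of_ne hcomm h.ne, rfl]
  have hdiag : ∑ μ, g μ μ = -numberOp a ad := by
    simp only [hg, numberOp, sub_self, zero_sub, sum_neg_distrib]
  have hfull : ∑ μ, ∑ ν, g μ ν = (∑ μ, ad μ * ad μ) * (∑ ν, a ν * a ν)
      - (numberOp a ad * numberOp a ad - numberOp a ad) - (Fintype.card ι : R) * numberOp a ad := by
    have hswap : ∀ μ ν, ad μ * ad ν * (a ν * a μ) = ad μ * ad ν * (a μ * a ν) := fun μ ν => by
      rw [haa]
    rw [numberOp_mul_self hcomm, add_sub_cancel_right, sum_mul_sum]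
    simp only [hg, sum_sub_distrib, hswap, sum_const, card_univ, nsmul_eq_mul, numberOp, mul_sum]
  rw [hlt, eq_sub_of_add_eq (sum_sum_ite_lt_add_sum_diag g), hfull, hdiag]
  noncomm_ring

theorem casimir_eq_sum_lt_angularMomentum_sq {𝕜 : Type*} [Field 𝕜] [CharZero 𝕜] [Algebra 𝕜 R]
    [Fintype ι] [LinearOrder ι]
    (hcomm : ∀ μ ν, a μ * ad ν - ad ν * a μ = if μ = ν then 1 else 0)
    (haa : ∀ μ ν, a μ * a ν = a ν * a μ) {J0 Jp Jm : R}
    (hJ0 : J0 = ∑ μ, (1/2 : 𝕜) • (ad μ * a μ + (1/2 : 𝕜) • (1 : R)))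
    (hJp : Jp = ∑ μ, (1/2 : 𝕜) • (ad μ * ad μ))
    (hJm : Jm = ∑ μ, (1/2 : 𝕜) • (a μ * a μ)) :
    J0 * J0 - Jp * Jm - J0 =
      -(1/4 : 𝕜) • ∑ μ, ∑ ν, (if μ < ν then (ad μ * a ν - a μ * ad ν) ^ 2 else 0)
        + ((Fintype.card ι : 𝕜) * (Fintype.card ι - 4) / 16) • (1 : R) := by
  have hJ0' : J0 = (1/2 : 𝕜) • numberOp a ad + ((Fintype.card ι : 𝕜) / 4) • (1 : R) := by
    simp only [hJ0, numberOp, smul_add, sum_add_distrib, ← smul_sum, sum_const, card_univ]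
    module
  have hJpJm : Jp * Jm = (1/4 : 𝕜) • ((∑ μ, ad μ * ad μ) * (∑ ν, a ν * a ν)) := by
    rw [hJp, hJm, ← smul_sum, ← smul_sum, smul_mul_smul_comm]
    norm_num
  rw [hJ0', hJpJm, sum_lt_angularMomentum_sq hcomm haa, sub_mul, ← nsmul_eq_mul, two_mul]
  simp only [add_mul, mul_add, smul_mul_assoc, mul_smul_comm, one_mul, mul_one]
  module

end CanonicalCommutation

theorem stmt7_general (R : Type*) [Ring R] [Algebra ℂ R]
    (a ad : Fin 4 → R)
    (hcomm : ∀ μ ν, a μ * ad ν - ad ν * a μ = if μ = ν then 1 else 0)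
    (haa : ∀ μ ν, a μ * a ν = a ν * a μ)
    (L : Fin 4 → Fin 4 → R)
    (hL : ∀ μ ν, L μ ν = ad μ * a ν - a μ * ad ν)
    (J0 Jp Jm C K1 : R)
    (hJ0 : J0 = ∑ μ : Fin 4, (1/2 : ℂ) • (ad μ * a μ + (1/2 : ℂ) • (1 : R)))
    (hJp : Jp = ∑ μ : Fin 4, (1/2 : ℂ) • (ad μ * ad μ))
    (hJm : Jm = ∑ μ : Fin 4, (1/2 : ℂ) • (a μ * a μ))
    (hC : C = J0 * J0 - Jp * Jm - J0)
    (hK1 : K1 = (1/8 : ℂ) • (∑ μ : Fin 4, ∑ ν : Fin 4, if μ < ν then L μ ν ^ 2 else 0)) :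
    ∃ c : ℂ, C = -((2 : ℂ) • K1) + c • (1 : R) := by
  refine ⟨0, ?_⟩
  rw [hC, casimir_eq_sum_lt_angularMomentum_sq hcomm haa hJ0 hJp hJm, hK1]
  simp only [hL, Fintype.card_fin]
  module

/-- In the Weyl algebra of four oscillators, the su(1,1) Casimir
C^{(1234)} = (J₀^{(1234)})² − J₊^{(1234)} J₋^{(1234)} − J₀^{(1234)} of the sum
of four metaplectic representations equals −2K₁ where
K₁ = (1/8)Σ_{1≤μ<ν≤4} L_{μν}², up to an explicit additive scalar. -/
theorem stmt7 (R : Type*) [Ring R] [Algebra ℂ R]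
    (a ad : Fin 4 → R)
    (hcomm : ∀ μ ν, a μ * ad ν - ad ν * a μ = if μ = ν then 1 else 0)
    (haa : ∀ μ ν, a μ * a ν = a ν * a μ)
    (hadad : ∀ μ ν, ad μ * ad ν = ad ν * ad μ)
    (L : Fin 4 → Fin 4 → R)
    (hL : ∀ μ ν, L μ ν = ad μ * a ν - a μ * ad ν)
    (J0 Jp Jm C K1 : R)
    (hJ0 : J0 = ∑ μ : Fin 4, (1/2 : ℂ) • (ad μ * a μ + (1/2 : ℂ) • (1 : R)))
    (hJp : Jp = ∑ μ : Fin 4, (1/2 : ℂ) • (ad μ * ad μ))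
    (hJm : Jm = ∑ μ : Fin 4, (1/2 : ℂ) • (a μ * a μ))
    (hC : C = J0 * J0 - Jp * Jm - J0)
    (hK1 : K1 = (1/8 : ℂ) • (∑ μ : Fin 4, ∑ ν : Fin 4, if μ < ν then L μ ν ^ 2 else 0)) :
    ∃ c : ℂ, C = -((2 : ℂ) • K1) + c • (1 : R) :=
  stmt7_general R a ad hcomm haa L hL J0 Jp Jm C K1 hJ0 hJp hJm hC hK1
end

section
/- In the q-oscillator algebra with generators A⁰, A⁺, A⁻ satisfying [A⁰, A^±] = ±A^±, [A⁻, A⁺] = q^{A⁰}, and A⁻A⁺ − qA⁺A⁻ = 1, the operators J_0 = (1/2)(A⁰ + 1/2), J_± = (1/[2]_{q^{1/2}})(A^±)² satisfy the U_q(su(1,1)) relations [J_0, J_±] = ±J_± and J_- J_+ − q² J_+ J_- = q^{2J_0} [2J_0]_q, where [x]_q = (q^x − q^{−x})/(q − q^{−1}). -/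
/-!
The ladder relations come from `[A⁰, X²] = X[A⁰, X] + [A⁰, X]X`. For the quadratic one, put
`N = A⁺A⁻`. The defining relations give `A⁻A⁺ = 1 + qN` and `q^{A⁰} = 1 + (q - 1)N`, hence
`(A⁻)²(A⁺)² = A⁻A⁺ + q(A⁻A⁺)²` and `q(A⁺)²(A⁻)² = N² - N`, so everything is a polynomial in `N`
and `(q - 1)((A⁻)²(A⁺)² - q²(A⁺)²(A⁻)²) = (q + 1)(q(q^{A⁰})² - 1)` is a polynomial identity.
It remains to note `[2]_{q^{1/2}}⁻² (q + 1)/(q - 1) = (q - q⁻¹)⁻¹`.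
-/

section LadderCommutator

variable {𝕜 R : Type*} [Ring R]

theorem commutator_mul_self_of_commutator_eq_smul [CommRing 𝕜] [Algebra 𝕜 R] {A X : R} {k : 𝕜}
    (h : A * X - X * A = k • X) : A * (X * X) - X * X * A = (2 * k) • (X * X) := by
  have hAX : A * X = X * A + k • X := sub_eq_iff_eq_add'.mp h
  calc A * (X * X) - X * X * A = A * X * X - X * X * A := by rw [← mul_assoc]
    _ = (X * A + k • X) * X - X * X * A := by rw [hAX]
    _ = X * (X * A + k • X) + k • (X * X) - X * X * A := by
      rw [add_mul, mul_assoc, hAX, smul_mul_assoc]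
    _ = (2 * k) • (X * X) := by
      rw [mul_add, mul_smul_comm, ← mul_assoc]
      module

theorem half_shift_commutator_smul_mul_self [Field 𝕜] [CharZero 𝕜] [Algebra 𝕜 R] {A X : R}
    {k : 𝕜} (c : 𝕜) (h : A * X - X * A = k • X) :
    (1 / 2 : 𝕜) • (A + (1 / 2 : 𝕜) • 1) * (c • (X * X))
      - c • (X * X) * ((1 / 2 : 𝕜) • (A + (1 / 2 : 𝕜) • 1)) = k • (c • (X * X)) := by
  have h2 := commutator_mul_self_of_commutator_eq_smul h
  calc _ = ((1 / 2 : 𝕜) * c) • (A * (X * X) - X * X * A) := by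
        simp only [smul_mul_assoc, mul_smul_comm, add_mul, mul_add, one_mul, mul_one, smul_sub,
          smul_add, smul_smul]
        module
    _ = k • (c • (X * X)) := by
        rw [h2, smul_smul, smul_smul]
        congr 1
        ring

end LadderCommutator

namespace QOscillator

variable {𝕜 R : Type*} [CommRing 𝕜] [Ring R] [Algebra 𝕜 R] {q : 𝕜} {Ap Am Q : R}

theorem lower_mul_raise (hqcom : Am * Ap - q • (Ap * Am) = 1) :
    Am * Ap = 1 + q • (Ap * Am) :=
  sub_eq_iff_eq_add'.mp hqcom |>.trans (add_comm _ _)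

theorem eq_one_add_sub_one_smul (hcom : Am * Ap - Ap * Am = Q)
    (hqcom : Am * Ap - q • (Ap * Am) = 1) : Q = 1 + (q - 1) • (Ap * Am) := by
  rw [← hcom, lower_mul_raise hqcom]
  module

theorem lower_sq_mul_raise_sq (hqcom : Am * Ap - q • (Ap * Am) = 1) :
    Am * Am * (Ap * Ap) = Am * Ap + q • (Am * Ap * (Am * Ap)) := by
  calc Am * Am * (Ap * Ap) = Am * (1 + q • (Ap * Am)) * Ap := by
        rw [← lower_mul_raise hqcom]
        noncomm_ring
    _ = Am * Ap + q • (Am * Ap * (Am * Ap)) := by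
      rw [mul_add, add_mul, mul_smul_comm, smul_mul_assoc]
      simp only [mul_one, mul_assoc]

theorem smul_raise_sq_mul_lower_sq (hqcom : Am * Ap - q • (Ap * Am) = 1) :
    q • (Ap * Ap * (Am * Am)) = Ap * Am * (Ap * Am) - Ap * Am := by
  calc q • (Ap * Ap * (Am * Am)) = Ap * (1 + q • (Ap * Am)) * Am - Ap * Am := by
        rw [mul_add, add_mul, mul_smul_comm, smul_mul_assoc]
        noncomm_ring
    _ = Ap * Am * (Ap * Am) - Ap * Am := by
      rw [← lower_mul_raise hqcom]
      noncomm_ring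

theorem sub_one_smul_quadratic_relation (hcom : Am * Ap - Ap * Am = Q)
    (hqcom : Am * Ap - q • (Ap * Am) = 1) :
    (q - 1) • (Am * Am * (Ap * Ap) - q ^ 2 • (Ap * Ap * (Am * Am)))
      = (q + 1) • (q • (Q * Q) - 1) := by
  rw [lower_sq_mul_raise_sq hqcom, pow_two, mul_smul, smul_raise_sq_mul_lower_sq hqcom,
    eq_one_add_sub_one_smul hcom hqcom, lower_mul_raise hqcom]
  simp only [mul_add, add_mul, mul_smul_comm, smul_mul_assoc, mul_one, one_mul, smul_add,
    smul_sub, smul_smul]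
  module

end QOscillator

theorem inv_sqrt_add_inv_sqrt_sq {q : ℝ} (hq : 0 ≤ q) :
    (√q + (√q)⁻¹)⁻¹ * (√q + (√q)⁻¹)⁻¹ = q / (q + 1) ^ 2 := by
  rcases hq.eq_or_lt with rfl | hq
  · simp
  obtain ⟨s, hs, rfl⟩ : ∃ s, 0 < s ∧ q = s ^ 2 :=
    ⟨√q, Real.sqrt_pos.2 hq, (Real.sq_sqrt hq.le).symm⟩
  rw [Real.sqrt_sq hs.le]
  field_simp

theorem stmt14_general (q : ℝ) (hq : 0 < q) (hq1 : q ≠ 1)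
    (R : Type*) [Ring R] [Algebra ℝ R]
    (A0 Ap Am Q : R)
    (h0p : A0 * Ap - Ap * A0 = Ap)
    (h0m : A0 * Am - Am * A0 = -Am)
    (hcom : Am * Ap - Ap * Am = Q)
    (hqcom : Am * Ap - q • (Ap * Am) = 1)
    (J0 Jp Jm : R)
    (hJ0 : J0 = (1/2 : ℝ) • (A0 + (1/2 : ℝ) • (1 : R)))
    (hJp : Jp = (Real.sqrt q + (Real.sqrt q)⁻¹)⁻¹ • (Ap * Ap))
    (hJm : Jm = (Real.sqrt q + (Real.sqrt q)⁻¹)⁻¹ • (Am * Am)) :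
    J0 * Jp - Jp * J0 = Jp ∧
    J0 * Jm - Jm * J0 = -Jm ∧
    Jm * Jp - (q ^ 2) • (Jp * Jm) = (q - q⁻¹)⁻¹ • (q • (Q * Q) - 1) := by
  set c := (√q + (√q)⁻¹)⁻¹
  refine ⟨?_, ?_, ?_⟩
  · rw [hJ0, hJp, half_shift_commutator_smul_mul_self c (k := (1 : ℝ)) (by rwa [one_smul]),
      one_smul]
  · rw [hJ0, hJm, half_shift_commutator_smul_mul_self c (k := (-1 : ℝ)) (by rwa [neg_one_smul]),
      neg_one_smul]
  have hq1' : q - 1 ≠ 0 := sub_ne_zero.mpr hq1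
  have hquad :=
    (eq_inv_smul_iff₀ hq1').mpr (QOscillator.sub_one_smul_quadratic_relation hcom hqcom)
  calc Jm * Jp - q ^ 2 • (Jp * Jm)
      = (c * c) • (Am * Am * (Ap * Ap) - q ^ 2 • (Ap * Ap * (Am * Am))) := by
        rw [hJp, hJm]
        simp only [smul_mul_assoc, mul_smul_comm, smul_smul, smul_sub]
        module
    _ = (q - q⁻¹)⁻¹ • (q • (Q * Q) - 1) := by
      rw [hquad, smul_smul, smul_smul, inv_sqrt_add_inv_sqrt_sq hq.le]
      congr 1
      have hq1'' : q + 1 ≠ 0 := by positivity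
      rw [show q - q⁻¹ = (q - 1) * (q + 1) / q by field_simp; ring]
      field_simp

/-- In the q-oscillator algebra with [A⁰,A^±] = ±A^±,
[A⁻,A⁺] = q^{A⁰}, A⁻A⁺ − qA⁺A⁻ = 1 (here Q plays the role of q^{A⁰}, with
inverse Qinv and conjugation relations Q A^± = q^{±1} A^± Q), the operators
J₀ = (1/2)(A⁰ + 1/2), J± = (A^±)²/[2]_{q^{1/2}} satisfy the U_q(su(1,1))
relations [J₀,J±] = ±J± and J₋J₊ − q²J₊J₋ = q^{2J₀}[2J₀]_q, where
q^{2J₀}[2J₀]_q = (q − q⁻¹)⁻¹ (q·Q² − 1). -/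
theorem stmt14 (q : ℝ) (hq : 0 < q) (hq1 : q ≠ 1)
    (R : Type*) [Ring R] [Algebra ℝ R]
    (A0 Ap Am Q Qinv : R)
    (h0p : A0 * Ap - Ap * A0 = Ap)
    (h0m : A0 * Am - Am * A0 = -Am)
    (hQQ : Q * Qinv = 1) (hQQ' : Qinv * Q = 1)
    (hQ0 : Q * A0 = A0 * Q)
    (hQp : Q * Ap = q • (Ap * Q))
    (hQm : Q * Am = q⁻¹ • (Am * Q))
    (hcom : Am * Ap - Ap * Am = Q)
    (hqcom : Am * Ap - q • (Ap * Am) = 1)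
    (J0 Jp Jm : R)
    (hJ0 : J0 = (1/2 : ℝ) • (A0 + (1/2 : ℝ) • (1 : R)))
    (hJp : Jp = (Real.sqrt q + (Real.sqrt q)⁻¹)⁻¹ • (Ap * Ap))
    (hJm : Jm = (Real.sqrt q + (Real.sqrt q)⁻¹)⁻¹ • (Am * Am)) :
    J0 * Jp - Jp * J0 = Jp ∧
    J0 * Jm - Jm * J0 = -Jm ∧
    Jm * Jp - (q ^ 2) • (Jp * Jm) = (q - q⁻¹)⁻¹ • (q • (Q * Q) - 1) :=
  stmt14_general q hq hq1 R A0 Ap Am Q h0p h0m hcom hqcom J0 Jp Jm hJ0 hJp hJm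
end

section
/- In the algebra of two independent q-oscillators {A_i⁰, A_i^±} (i = 1,2), the element L_{12} = q^{−(A_1⁰ + 1/2)/2}(q^{1/4} A_1⁺ A_2⁻ − q^{−1/4} A_1⁻ A_2⁺) commutes with the coproduct-summed U_q(su(1,1)) generators J_0^{(2)} = (1/2)(A_1⁰ + 1/2) + (1/2)(A_2⁰ + 1/2) and J_±^{(2)} = (1/[2]_{q^{1/2}})((A_1^±)² q^{A_2⁰ + 1/2} + (A_2^±)²). -/
/-!
Write `a, b` for `A₁^±`, `c, d` for `A₂^±`, `K = q^{A₂⁰}`, `s = q^{1/2}` and `T = q^{-A₁⁰/2}`,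
so that `T a = s⁻¹ a T` and `T b = s b T`. Up to a scalar, `L₁₂ = T (s a d - b c)`.
The operators `a d` and `b c` have weight zero for `A₁⁰ + A₂⁰`, which gives `J₀`.
Pushing `s a d - b c` through `s a² K + c²` (for `J₊`) leaves two defects,
`s a (d c² - c² d)` and `s (b a² - q² a² b) c K`; the two oscillator relations make both equal
to `(1 + q) s a c K`, so they cancel: this is where the factor `q^{1/2}` of `J₊` has to agree
with the one in `L₁₂`. `J₋` is the mirror computation with `b² a - q² a b² = (1 + q) b` and
`d² c - c d² = (1 + q) K d`.
-/

section

variable {k R : Type*} [CommRing k] [Ring R] [Algebra k R]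

theorem mul_mul_self_sub_of_qcomm {q : k} {a b : R} (h : b * a - q • (a * b) = 1) :
    b * (a * a) - (q * q) • (a * a * b) = (1 + q) • a :=
  calc b * (a * a) - (q * q) • (a * a * b)
      = (b * a - q • (a * b)) * a + q • (a * (b * a - q • (a * b))) := by
        simp only [sub_mul, mul_sub, smul_mul_assoc, mul_smul_comm, smul_sub, smul_smul, mul_assoc]
        abel
    _ = (1 + q) • a := by rw [h, one_mul, mul_one]; module

theorem mul_self_mul_sub_of_qcomm {q : k} {a b : R} (h : b * a - q • (a * b) = 1) :
    b * b * a - (q * q) • (a * (b * b)) = (1 + q) • b :=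
  calc b * b * a - (q * q) • (a * (b * b))
      = b * (b * a - q • (a * b)) + q • ((b * a - q • (a * b)) * b) := by
        simp only [sub_mul, mul_sub, smul_mul_assoc, mul_smul_comm, smul_sub, smul_smul, mul_assoc]
        abel
    _ = (1 + q) • b := by rw [h, one_mul, mul_one]; module

theorem mul_mul_self_sub_of_comm {q : k} {a b K : R} (h : b * a - a * b = K)
    (hKa : K * a = q • (a * K)) : b * (a * a) - a * a * b = (1 + q) • (a * K) :=
  calc b * (a * a) - a * a * b = (b * a - a * b) * a + a * (b * a - a * b) := by noncomm_ring
    _ = (1 + q) • (a * K) := by rw [h, hKa]; module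

theorem mul_self_mul_sub_of_comm {q : k} {a b K : R} (h : b * a - a * b = K)
    (hbK : b * K = q • (K * b)) : b * b * a - a * (b * b) = (1 + q) • (K * b) :=
  calc b * b * a - a * (b * b) = b * (b * a - a * b) + (b * a - a * b) * b := by noncomm_ring
    _ = (1 + q) • (K * b) := by rw [h, hbK]; module

theorem SemiconjBy.mul_self_mul_add_mul_self {T x x' y z : R} (hx : SemiconjBy T x x')
    (hy : Commute T y) (hz : Commute T z) :
    SemiconjBy T (x * x * z + y * y) (x' * x' * z + y * y) :=
  ((hx.mul_right hx).mul_right hz).add_right (hy.mul_right hy)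

theorem commute_mul_add_of_sub_eq {e f x y : R} (hex : e * x - x * e = x) (hfx : Commute f x)
    (hey : Commute e y) (hfy : f * y - y * f = -y) : Commute (x * y) (e + f) := by
  have h : (e + f) * (x * y) - x * y * (e + f) =
      (e * x - x * e) * y + x * (e * y - y * e) + (f * x - x * f) * y + x * (f * y - y * f) := by
    noncomm_ring
  rw [hex, hfy, hey.eq, hfx.eq, sub_self, sub_self, mul_zero, zero_mul, add_zero, add_zero,
    mul_neg, add_neg_cancel] at h
  exact (sub_eq_zero.mp h).symm

theorem commute_hop_number (s : k) {T e f a b c d : R}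
    (hea : e * a - a * e = a) (heb : e * b - b * e = -b)
    (hfc : f * c - c * f = c) (hfd : f * d - d * f = -d)
    (hcomm : ∀ u ∈ ({e, a, b} : Set R), ∀ v ∈ ({f, c, d} : Set R), Commute u v)
    (hTe : Commute T e) (hTf : Commute T f) :
    Commute (T * ((s • a) * d - b * c)) (e + f) := by
  have had := commute_mul_add_of_sub_eq hea (hcomm a (by simp) f (by simp)).symm
    (hcomm e (by simp) d (by simp)) hfd
  have hcb := commute_mul_add_of_sub_eq hfc (hcomm e (by simp) c (by simp))
    (hcomm b (by simp) f (by simp)).symm heb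
  rw [(hcomm b (by simp) c (by simp)).eq, smul_mul_assoc]
  exact (hTe.add_right hTf).mul_left ((had.smul_left s).sub_left (add_comm f e ▸ hcb))

theorem semiconjBy_hop_raising {q s : k} {a b c d K : R} (hsq : s * s = q)
    (hab : b * a - q • (a * b) = 1) (hcd : d * c - c * d = K)
    (hKc : K * c = q • (c * K)) (hdK : d * K = q • (K * d))
    (hcomm : ∀ u ∈ ({a, b} : Set R), ∀ v ∈ ({c, d, K} : Set R), Commute u v) :
    SemiconjBy ((s • a) * d - b * c) (a * a * (s • K) + c * c)
      ((s • a) * (s • a) * (s • K) + c * c) := by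
  subst hsq
  have hca : Commute c a := (hcomm a (by simp) c (by simp)).symm
  have hda : Commute d a := (hcomm a (by simp) d (by simp)).symm
  have hKa : Commute K a := (hcomm a (by simp) K (by simp)).symm
  have hcb : Commute c b := (hcomm b (by simp) c (by simp)).symm
  have hKb : Commute K b := (hcomm b (by simp) K (by simp)).symm
  have h₁ : a * d * (a * a * K) = (s * s) • (a * a * K * (a * d)) := by
    simp only [mul_assoc, hda.left_comm, hKa.left_comm, hdK, mul_smul_comm]
  have h₂ : b * c * (a * a * K) - (s * s) • (a * a * K * (b * c)) =
      (1 + s * s) • (a * c * K) :=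
    calc _ = (b * (a * a) - (s * s * (s * s)) • (a * a * b)) * (c * K) := by
          simp only [mul_assoc, hca.left_comm, hKb.left_comm, hKc, mul_smul_comm, smul_mul_assoc,
            sub_mul, smul_smul]
      _ = _ := by rw [mul_mul_self_sub_of_qcomm hab, smul_mul_assoc, mul_assoc]
  have h₃ : a * d * (c * c) - c * c * (a * d) = (1 + s * s) • (a * c * K) :=
    calc _ = a * (d * (c * c) - c * c * d) := by simp only [mul_sub, mul_assoc, hca.left_comm]
      _ = _ := by rw [mul_mul_self_sub_of_comm hcd hKc, mul_smul_comm, mul_assoc]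
  have h₄ : b * c * (c * c) = c * c * (b * c) := by simp only [mul_assoc, hcb.left_comm]
  unfold SemiconjBy
  simp only [mul_add, add_mul, mul_sub, sub_mul, smul_mul_assoc, mul_smul_comm, smul_smul]
  linear_combination (norm := module) (s * s) • h₁ + s • h₃ - s • h₂ - h₄

theorem semiconjBy_hop_lowering {q s : k} {a b c d K : R} (hsq : s * s = q)
    (hab : b * a - q • (a * b) = 1) (hcd : d * c - c * d = K)
    (hKc : K * c = q • (c * K)) (hdK : d * K = q • (K * d))
    (hcomm : ∀ u ∈ ({a, b} : Set R), ∀ v ∈ ({c, d, K} : Set R), Commute u v) :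
    SemiconjBy (a * d - (s • b) * c) ((s • b) * (s • b) * (s • K) + d * d)
      (b * b * (s • K) + d * d) := by
  subst hsq
  have hda : Commute d a := (hcomm a (by simp) d (by simp)).symm
  have hKa : Commute K a := (hcomm a (by simp) K (by simp)).symm
  have hcb : Commute c b := (hcomm b (by simp) c (by simp)).symm
  have hdb : Commute d b := (hcomm b (by simp) d (by simp)).symm
  have hKb : Commute K b := (hcomm b (by simp) K (by simp)).symm
  have h₁ : b * b * K * (b * c) = (s * s) • (b * c * (b * b * K)) := by
    simp only [mul_assoc, hcb.left_comm, hKb.left_comm, hKc, mul_smul_comm]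
  have h₂ : a * d * (d * d) = d * d * (a * d) := by simp only [mul_assoc, hda.left_comm]
  have h₃ : (s * s) • (a * d * (b * b * K)) - b * b * K * (a * d) =
      -((1 + s * s) • (b * K * d)) :=
    calc _ = -((b * b * a - (s * s * (s * s)) • (a * (b * b))) * (K * d)) := by
          simp only [mul_assoc, hdb.left_comm, hKa.left_comm, hdK, mul_smul_comm, smul_mul_assoc,
            sub_mul, smul_smul, neg_sub]
      _ = _ := by rw [mul_self_mul_sub_of_qcomm hab, smul_mul_assoc, mul_assoc]
  have h₄ : b * c * (d * d) - d * d * (b * c) = -((1 + s * s) • (b * K * d)) :=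
    calc _ = -(b * (d * d * c - c * (d * d))) := by
          simp only [mul_sub, mul_assoc, hdb.left_comm, neg_sub]
      _ = _ := by rw [mul_self_mul_sub_of_comm hcd hdK, mul_smul_comm, mul_assoc]
  unfold SemiconjBy
  simp only [mul_add, add_mul, mul_sub, sub_mul, smul_mul_assoc, mul_smul_comm, smul_smul]
  linear_combination (norm := module) s • h₃ + h₂ + (s * s) • h₁ - s • h₄

theorem commute_hop_raising {q s : k} {T a b c d K : R} (hsq : s * s = q)
    (hab : b * a - q • (a * b) = 1) (hcd : d * c - c * d = K)
    (hKc : K * c = q • (c * K)) (hdK : d * K = q • (K * d))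
    (hcomm : ∀ u ∈ ({a, b} : Set R), ∀ v ∈ ({c, d, K} : Set R), Commute u v)
    (hTa : SemiconjBy T (s • a) a) (hTc : Commute T c) (hTK : Commute T K) :
    Commute (T * ((s • a) * d - b * c)) (a * a * (s • K) + c * c) :=
  (hTa.mul_self_mul_add_mul_self hTc (hTK.smul_right s)).mul_left
    (semiconjBy_hop_raising hsq hab hcd hKc hdK hcomm)

theorem commute_hop_lowering {q s : k} {T a b c d K : R} (hsq : s * s = q)
    (hab : b * a - q • (a * b) = 1) (hcd : d * c - c * d = K)
    (hKc : K * c = q • (c * K)) (hdK : d * K = q • (K * d))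
    (hcomm : ∀ u ∈ ({a, b} : Set R), ∀ v ∈ ({c, d, K} : Set R), Commute u v)
    (hTa : SemiconjBy T (s • a) a) (hTb : SemiconjBy T b (s • b))
    (hTc : Commute T c) (hTd : Commute T d) (hTK : Commute T K) :
    Commute (T * ((s • a) * d - b * c)) (b * b * (s • K) + d * d) := by
  rw [((hTa.mul_right hTd).sub_right (hTb.mul_right hTc)).eq]
  exact (semiconjBy_hop_lowering hsq hab hcd hKc hdK hcomm).mul_left
    (hTb.mul_self_mul_add_mul_self hTd (hTK.smul_right s))

end

theorem inv_smul_mul_smul_sub_inv_smul {k R : Type*} [Field k] [Ring R] [Algebra k R] {r : k}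
    (hr : r ≠ 0) (T x y : R) :
    r⁻¹ • (T * (r • x - r⁻¹ • y)) = (r * r)⁻¹ • (T * ((r * r) • x - y)) := by
  simp only [mul_sub, mul_smul_comm, smul_sub, smul_smul]
  match_scalars <;> field_simp

theorem stmt15_general (q : ℝ) (hq : 0 < q)
    (R : Type*) [Ring R] [Algebra ℝ R]
    (A0 Ap Am Q Qinv : Fin 2 → R) (T : R)
    (h0p : ∀ i, A0 i * Ap i - Ap i * A0 i = Ap i)
    (h0m : ∀ i, A0 i * Am i - Am i * A0 i = -Am i)
    (hQp : ∀ i, Q i * Ap i = q • (Ap i * Q i))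
    (hQm : ∀ i, Q i * Am i = q⁻¹ • (Am i * Q i))
    (hcom : ∀ i, Am i * Ap i - Ap i * Am i = Q i)
    (hqcom : ∀ i, Am i * Ap i - q • (Ap i * Am i) = 1)
    -- generators of distinct oscillators commute
    (hdist : ∀ i j, i ≠ j → ∀ u ∈ ({A0 i, Ap i, Am i, Q i, Qinv i} : Set R),
      ∀ v ∈ ({A0 j, Ap j, Am j, Q j, Qinv j} : Set R), u * v = v * u)
    -- T = q^{−A₁⁰/2}: square is Qinv 0, conjugation relations, commutes with oscillator 2
    (hT0 : T * A0 0 = A0 0 * T)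
    (hTp : T * Ap 0 = (Real.sqrt q)⁻¹ • (Ap 0 * T))
    (hTm : T * Am 0 = Real.sqrt q • (Am 0 * T))
    (hTdist : ∀ v ∈ ({A0 1, Ap 1, Am 1, Q 1, Qinv 1} : Set R), T * v = v * T)
    (L J0 Jp Jm : R)
    (hL : L = (Real.sqrt (Real.sqrt q))⁻¹ •
      (T * (Real.sqrt (Real.sqrt q) • (Ap 0 * Am 1)
            - (Real.sqrt (Real.sqrt q))⁻¹ • (Am 0 * Ap 1))))
    (hJ0 : J0 = (1/2 : ℝ) • (A0 0 + (1/2 : ℝ) • (1 : R))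
              + (1/2 : ℝ) • (A0 1 + (1/2 : ℝ) • (1 : R)))
    (hJp : Jp = (Real.sqrt q + (Real.sqrt q)⁻¹)⁻¹ •
      (Ap 0 * Ap 0 * (Real.sqrt q • Q 1) + Ap 1 * Ap 1))
    (hJm : Jm = (Real.sqrt q + (Real.sqrt q)⁻¹)⁻¹ •
      (Am 0 * Am 0 * (Real.sqrt q • Q 1) + Am 1 * Am 1)) :
    L * J0 = J0 * L ∧ L * Jp = Jp * L ∧ L * Jm = Jm * L := by
  set s := Real.sqrt q
  have hs : s ≠ 0 := (Real.sqrt_pos.2 hq).ne'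
  have hsq : s * s = q := Real.mul_self_sqrt hq.le
  have hsub : ∀ S ⊆ ({A0 0, Ap 0, Am 0, Q 0, Qinv 0} : Set R),
      ∀ S' ⊆ ({A0 1, Ap 1, Am 1, Q 1, Qinv 1} : Set R), ∀ u ∈ S, ∀ v ∈ S', Commute u v :=
    fun S hS S' hS' u hu v hv ↦ hdist 0 1 (by decide) u (hS hu) v (hS' hv)
  have hosc : ∀ u ∈ ({Ap 0, Am 0} : Set R), ∀ v ∈ ({Ap 1, Am 1, Q 1} : Set R), Commute u v :=
    hsub _ (by simp [Set.insert_subset_iff]) _ (by simp [Set.insert_subset_iff])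
  have hdK : Am 1 * Q 1 = q • (Q 1 * Am 1) := (inv_smul_eq_iff₀ hq.ne').1 (hQm 1).symm
  have hTa : SemiconjBy T (s • Ap 0) (Ap 0) := by
    rw [SemiconjBy, mul_smul_comm, hTp, smul_inv_smul₀ hs]
  have hTb : SemiconjBy T (Am 0) (s • Am 0) := by rw [SemiconjBy, hTm, smul_mul_assoc]
  have hL' : L = s⁻¹ • (T * ((s • Ap 0) * Am 1 - Am 0 * Ap 1)) := by
    rw [hL, inv_smul_mul_smul_sub_inv_smul (Real.sqrt_pos.2 (Real.sqrt_pos.2 hq)).ne',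
      Real.mul_self_sqrt (Real.sqrt_nonneg q), smul_mul_assoc]
  refine ⟨?_, ?_, ?_⟩
  · have hJ0' : J0 = (1 / 2 : ℝ) • (A0 0 + A0 1) + (1 / 2 : ℝ) • (1 : R) := by rw [hJ0]; module
    rw [hL', hJ0']
    exact (((commute_hop_number s (h0p 0) (h0m 0) (h0p 1) (h0m 1)
      (hsub _ (by simp [Set.insert_subset_iff]) _ (by simp [Set.insert_subset_iff]))
      hT0 (hTdist _ (by simp))).smul_right _).add_right
      ((Commute.one_right _).smul_right _)).smul_left _
  · rw [hL', hJp]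
    exact ((commute_hop_raising hsq (hqcom 0) (hcom 1) (hQp 1) hdK hosc hTa
      (hTdist _ (by simp)) (hTdist _ (by simp))).smul_right _).smul_left _
  · rw [hL', hJm]
    exact ((commute_hop_lowering hsq (hqcom 0) (hcom 1) (hQp 1) hdK hosc hTa hTb
      (hTdist _ (by simp)) (hTdist _ (by simp)) (hTdist _ (by simp))).smul_right _).smul_left _

/-- In the algebra of two independent q-oscillators (with Q i
playing the role of q^{A_i⁰} and T the role of q^{−A₁⁰/2}), the element
L₁₂ = q^{−(A₁⁰+1/2)/2}(q^{1/4}A₁⁺A₂⁻ − q^{−1/4}A₁⁻A₂⁺) commutes with the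
coproduct-summed U_q(su(1,1)) generators
J₀^{(2)} = (1/2)(A₁⁰+1/2) + (1/2)(A₂⁰+1/2) and
J±^{(2)} = (1/[2]_{q^{1/2}})((A₁^±)² q^{A₂⁰+1/2} + (A₂^±)²). -/
theorem stmt15 (q : ℝ) (hq : 0 < q) (hq1 : q ≠ 1)
    (R : Type*) [Ring R] [Algebra ℝ R]
    (A0 Ap Am Q Qinv : Fin 2 → R) (T : R)
    (h0p : ∀ i, A0 i * Ap i - Ap i * A0 i = Ap i)
    (h0m : ∀ i, A0 i * Am i - Am i * A0 i = -Am i)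
    (hQQ : ∀ i, Q i * Qinv i = 1) (hQQ' : ∀ i, Qinv i * Q i = 1)
    (hQ0 : ∀ i, Q i * A0 i = A0 i * Q i)
    (hQp : ∀ i, Q i * Ap i = q • (Ap i * Q i))
    (hQm : ∀ i, Q i * Am i = q⁻¹ • (Am i * Q i))
    (hcom : ∀ i, Am i * Ap i - Ap i * Am i = Q i)
    (hqcom : ∀ i, Am i * Ap i - q • (Ap i * Am i) = 1)
    -- generators of distinct oscillators commute
    (hdist : ∀ i j, i ≠ j → ∀ u ∈ ({A0 i, Ap i, Am i, Q i, Qinv i} : Set R),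
      ∀ v ∈ ({A0 j, Ap j, Am j, Q j, Qinv j} : Set R), u * v = v * u)
    -- T = q^{−A₁⁰/2}: square is Qinv 0, conjugation relations, commutes with oscillator 2
    (hT2 : T * T = Qinv 0)
    (hT0 : T * A0 0 = A0 0 * T)
    (hTp : T * Ap 0 = (Real.sqrt q)⁻¹ • (Ap 0 * T))
    (hTm : T * Am 0 = Real.sqrt q • (Am 0 * T))
    (hTdist : ∀ v ∈ ({A0 1, Ap 1, Am 1, Q 1, Qinv 1} : Set R), T * v = v * T)
    (L J0 Jp Jm : R)
    (hL : L = (Real.sqrt (Real.sqrt q))⁻¹ •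
      (T * (Real.sqrt (Real.sqrt q) • (Ap 0 * Am 1)
            - (Real.sqrt (Real.sqrt q))⁻¹ • (Am 0 * Ap 1))))
    (hJ0 : J0 = (1/2 : ℝ) • (A0 0 + (1/2 : ℝ) • (1 : R))
              + (1/2 : ℝ) • (A0 1 + (1/2 : ℝ) • (1 : R)))
    (hJp : Jp = (Real.sqrt q + (Real.sqrt q)⁻¹)⁻¹ •
      (Ap 0 * Ap 0 * (Real.sqrt q • Q 1) + Ap 1 * Ap 1))
    (hJm : Jm = (Real.sqrt q + (Real.sqrt q)⁻¹)⁻¹ •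
      (Am 0 * Am 0 * (Real.sqrt q • Q 1) + Am 1 * Am 1)) :
    L * J0 = J0 * L ∧ L * Jp = Jp * L ∧ L * Jm = Jm * L :=
  stmt15_general q hq R A0 Ap Am Q Qinv T h0p h0m hQp hQm hcom hqcom hdist hT0 hTp hTm hTdist L J0
    Jp Jm hL hJ0 hJp hJm
end
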